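/- Let P = Σ a_i T^i be a univariate polynomial of degree d with integer coefficients of absolute value less than 2^τ, and let R(Z) = Res_T(P(T) - Z, P'(T)) = Σ_{i=0}^{d-1} r_i Z^i. Then for all i ∈ {0,...,d-1}, |r_i| < 3^(-d/2) · (2^τ √((d+1)³))^d · C(d-1, i) · (2^τ √(d+1) - 1)^(d-1-i). -/

import Mathlib

open Polynomial

/-- The Sylvester matrix of `f` (viewed as having degree `n`) and `g` (viewed as
having degree `m`): `m` rows built from the coefficients of `f` followed by
`n` rows built from the coefficients of `g`. Its determinant is the resultant. -/
def sylvester {R : Type*} [CommRing R] (f g : Polynomial R) (n m : ℕ) :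
    Matrix (Fin (m + n)) (Fin (m + n)) R :=
  Matrix.of fun i j =>
    if (i : ℕ) < m then
      (if (i : ℕ) ≤ (j : ℕ) ∧ (j : ℕ) ≤ n + i then f.coeff (n + i - j) else 0)
    else
      (if (i : ℕ) - m ≤ (j : ℕ) ∧ (j : ℕ) ≤ m + ((i : ℕ) - m) then
        g.coeff (m + ((i : ℕ) - m) - j) else 0)

/-!
Over `ℤ[Z]` the Sylvester matrix of `P - Z` and `P'` is `A + Z • B`, where `A` is the Sylvester
matrix of `P` and `P'` and `B` has one entry `-1` in each of its first `d - 1` rows and is zero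
elsewhere. Expanding the determinant multilinearly in the rows, `r_i` is the sum, over the
`i`-element sets `s` of rows, of `det` of `A` with its rows in `s` replaced by those of `B`; only
the `C(d-1, i)` sets inside the first `d - 1` rows contribute. Hadamard's inequality bounds each of
these determinants by the product of its row norms: `1` for a row of `B`, `u √(d+1)` for a row
of `P` and `u √((d+1)³/3)` for a row of `P'`, where `u = 2^τ - 1` bounds the coefficients of `P`
(so that those of `P'` are at most `(t+1) u`).
-/

open Finset Matrix

theorem Real.prod_le_one_of_sum_eq_card {ι : Type*} [Fintype ι] {μ : ι → ℝ} (h0 : ∀ i, 0 ≤ μ i)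
    (hs : ∑ i, μ i = Fintype.card ι) : ∏ i, μ i ≤ 1 := by
  cases isEmpty_or_nonempty ι
  · simp
  have hcard : (0 : ℝ) < Fintype.card ι := by exact_mod_cast Fintype.card_pos
  have amgm := Real.geom_mean_le_arith_mean univ (fun _ ↦ 1) μ (by simp) (by simpa using hcard)
    (fun i _ ↦ h0 i)
  simp only [Real.rpow_one, one_mul, sum_const, card_univ, nsmul_eq_mul, mul_one, hs,
    div_self hcard.ne'] at amgm
  by_contra! h
  exact (Real.one_lt_rpow h (inv_pos.mpr hcard)).not_ge amgm

section Determinant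

variable {n : Type*} [Fintype n] [DecidableEq n]

theorem Matrix.PosSemidef.det_le_one_of_diag_eq_one {G : Matrix n n ℝ} (hG : G.PosSemidef)
    (hdiag : ∀ i, G i i = 1) : G.det ≤ 1 := by
  rw [hG.1.det_eq_prod_eigenvalues]
  refine Real.prod_le_one_of_sum_eq_card hG.eigenvalues_nonneg ?_
  have := hG.1.trace_eq_sum_eigenvalues
  simp_all [Matrix.trace]

/-- **Hadamard's inequality**. -/
theorem Matrix.det_sq_le_prod_sum_sq (A : Matrix n n ℝ) :
    A.det ^ 2 ≤ ∏ i, ∑ j, A i j ^ 2 := by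
  set N : n → ℝ := fun i ↦ ∑ j, A i j ^ 2
  by_cases hzero : ∃ i, N i = 0
  · obtain ⟨i, hi⟩ := hzero
    have hrow : ∀ j, A i j = 0 := fun j ↦ pow_eq_zero_iff two_ne_zero |>.mp <|
      (sum_eq_zero_iff_of_nonneg fun _ _ ↦ sq_nonneg _).mp hi j (mem_univ j)
    rw [det_eq_zero_of_row_eq_zero i hrow, prod_eq_zero (mem_univ i) hi]
    norm_num
  push Not at hzero
  have hN : ∀ i, 0 < N i := fun i ↦ (sum_nonneg fun j _ ↦ sq_nonneg (A i j)).lt_of_ne' (hzero i)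
  -- normalise the rows to unit length; the Gram matrix then has unit diagonal
  set B : Matrix n n ℝ := of fun i j ↦ (√(N i))⁻¹ * A i j
  have hdetB : B.det = (∏ i, (√(N i))⁻¹) * A.det := det_mul_column _ _
  have hGram : (B * Bᴴ).det ≤ 1 := by
    refine (posSemidef_self_mul_conjTranspose B).det_le_one_of_diag_eq_one fun i ↦ ?_
    calc (B * Bᴴ) i i = (√(N i) * √(N i))⁻¹ * N i := by
          simp only [B, N, mul_apply, conjTranspose_apply, star_trivial, of_apply, mul_sum]
          exact sum_congr rfl fun j _ ↦ by ring
      _ = 1 := by rw [Real.mul_self_sqrt (hN i).le, inv_mul_cancel₀ (hN i).ne']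
  have : (B * Bᴴ).det = A.det ^ 2 / ∏ i, N i := by
    rw [det_mul, det_conjTranspose, star_trivial, hdetB, prod_inv_distrib,
      ← Real.sqrt_prod _ fun i _ ↦ (hN i).le]
    field_simp
    rw [Real.sq_sqrt (prod_pos fun i _ ↦ hN i).le]
  rwa [this, div_le_one (prod_pos fun i _ ↦ hN i)] at hGram

theorem Matrix.abs_det_le_prod_sqrt_sum_sq (A : Matrix n n ℝ) :
    |A.det| ≤ ∏ i, √(∑ j, A i j ^ 2) := by
  rw [← Real.sqrt_prod (x := fun i ↦ ∑ j, A i j ^ 2) _ fun i _ ↦ by positivity]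
  exact Real.abs_le_sqrt A.det_sq_le_prod_sum_sq

variable {R : Type*} [CommRing R]

theorem Matrix.det_X_smul_map_C_rows (A B : Matrix n n R) (s : Finset n) :
    det (of fun i ↦ if i ∈ s then ((X : R[X]) • B.map C) i else A.map C i) =
      C (det (of fun i ↦ if i ∈ s then B i else A i)) * X ^ #s := by
  have : (of fun i ↦ if i ∈ s then ((X : R[X]) • B.map C) i else A.map C i) = of fun i j ↦
      (if i ∈ s then X else 1) * (of fun i ↦ if i ∈ s then B i else A i).map C i j := by
    ext i j
    by_cases hi : i ∈ s <;> simp [hi, mul_comm X]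
  rw [this, det_mul_column, prod_ite_mem, univ_inter, prod_const, ← RingHom.mapMatrix_apply,
    ← RingHom.map_det, mul_comm]

theorem Matrix.coeff_det_map_C_add_X_smul (A B : Matrix n n R) (k : ℕ) :
    (A.map C + (X : R[X]) • B.map C).det.coeff k =
      ∑ s : Finset n with #s = k, det (of fun i ↦ if i ∈ s then B i else A i) := by
  have expand : det ((X : R[X]) • B.map C + A.map C) =
      ∑ s : Finset n, det (of fun i ↦ if i ∈ s then ((X : R[X]) • B.map C) i else A.map C i) :=
    detRowAlternating.map_add_univ _ _
  rw [add_comm, expand, finsetSum_coeff]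
  simp only [det_X_smul_map_C_rows, coeff_C_mul_X_pow, sum_filter, eq_comm]

theorem Matrix.abs_coeff_det_map_C_add_X_smul_le (A B : Matrix n n ℝ) {a b : n → ℝ}
    (ha : ∀ i, √(∑ j, A i j ^ 2) ≤ a i) (hb : ∀ i, √(∑ j, B i j ^ 2) ≤ b i) (k : ℕ) :
    |(A.map C + (X : ℝ[X]) • B.map C).det.coeff k| ≤ (∏ i, (C (a i) + X * C (b i))).coeff k := by
  -- the right-hand side is the same expansion for the diagonal matrices of `a` and `b`
  have hprod : ∏ i, (C (a i) + X * C (b i)) =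
      ((diagonal a).map C + (X : ℝ[X]) • (diagonal b).map C).det := by
    rw [diagonal_map (map_zero C), diagonal_map (map_zero C), ← diagonal_smul, diagonal_add,
      det_diagonal]
    rfl
  have hrows (s : Finset n) : (of fun i ↦ if i ∈ s then diagonal b i else diagonal a i) =
      diagonal fun i ↦ if i ∈ s then b i else a i := by
    ext i j
    by_cases hi : i ∈ s <;> simp [hi, diagonal_apply]
  rw [hprod, coeff_det_map_C_add_X_smul, coeff_det_map_C_add_X_smul]
  refine (abs_sum_le_sum_abs _ _).trans (sum_le_sum fun s _ ↦ ?_)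
  rw [hrows, det_diagonal]
  refine (abs_det_le_prod_sqrt_sum_sq _).trans
    (prod_le_prod (fun i _ ↦ Real.sqrt_nonneg _) fun i _ ↦ ?_)
  by_cases hi : i ∈ s <;> simp [hi, ha, hb]

end Determinant

theorem sum_fin_window_le {N : ℕ} {c : ℕ → ℝ} (hc : ∀ t, 0 ≤ c t) (lo w : ℕ) :
    ∑ j : Fin N, (if lo ≤ (j : ℕ) ∧ (j : ℕ) ≤ w + lo then c (w + lo - j) else 0) ≤
      ∑ t ∈ range (w + 1), c t := by
  have hinj : Set.InjOn (fun j : Fin N ↦ w + lo - j) {j | lo ≤ (j : ℕ) ∧ (j : ℕ) ≤ w + lo} :=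
    fun a ha b hb hab ↦ Fin.ext (by simp_all; omega)
  rw [← sum_filter, ← sum_image (by simpa using hinj)]
  refine sum_le_sum_of_subset_of_nonneg (fun t ht ↦ ?_) fun t _ _ ↦ hc t
  simp only [mem_image, mem_filter] at ht
  obtain ⟨j, ⟨-, hj⟩, rfl⟩ := ht
  simp only [mem_range]
  omega

section Sylvester

variable {R S : Type*} [CommRing R] [CommRing S]

theorem sylvester_map (φ : R →+* S) (f g : R[X]) (n m : ℕ) :
    (_root_.sylvester f g n m).map φ = _root_.sylvester (f.map φ) (g.map φ) n m := by
  ext i j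
  simp only [_root_.sylvester, Matrix.map_apply, Matrix.of_apply, coeff_map]
  split_ifs <;> simp

theorem sylvester_map_C_sub_C_X (p q : R[X]) (n m : ℕ) :
    _root_.sylvester (p.map C - C X) (q.map C) n m =
      (_root_.sylvester p q n m).map C + (X : R[X]) • (_root_.sylvester (-1) 0 n m).map C := by
  ext i j : 1
  simp only [_root_.sylvester, Matrix.map_apply, of_apply, Matrix.add_apply, Matrix.smul_apply,
    coeff_sub, coeff_map, coeff_C, coeff_neg, coeff_one]
  split_ifs <;> simp [sub_eq_add_neg]

theorem coeff_det_sylvester_sub_C_X_map (φ : R →+* S) (p q : R[X]) (n m k : ℕ) :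
    φ ((_root_.sylvester (p.map C - C X) (q.map C) n m).det.coeff k) =
      (_root_.sylvester ((p.map φ).map C - C X) ((q.map φ).map C) n m).det.coeff k := by
  rw [← coeff_map, ← coe_mapRingHom, RingHom.map_det, RingHom.mapMatrix_apply, sylvester_map]
  simp [Polynomial.map_map, mapRingHom_comp_C]

theorem sum_sq_sylvester_of_lt (f g : ℝ[X]) {n m : ℕ} {i : Fin (m + n)} (hi : (i : ℕ) < m) :
    ∑ j, _root_.sylvester f g n m i j ^ 2 ≤ ∑ t ∈ range (n + 1), f.coeff t ^ 2 :=
  calc ∑ j, _root_.sylvester f g n m i j ^ 2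
      = ∑ j : Fin (m + n), if i ≤ j ∧ (j : ℕ) ≤ n + i then f.coeff (n + i - j) ^ 2 else 0 :=
        sum_congr rfl fun j _ ↦ by
          simp only [_root_.sylvester, of_apply, if_pos hi, ite_pow]; simp
    _ ≤ _ := sum_fin_window_le (fun t ↦ sq_nonneg _) _ _

theorem sum_sq_sylvester_of_le (f g : ℝ[X]) {n m : ℕ} {i : Fin (m + n)} (hi : m ≤ (i : ℕ)) :
    ∑ j, _root_.sylvester f g n m i j ^ 2 ≤ ∑ t ∈ range (m + 1), g.coeff t ^ 2 :=
  calc ∑ j, _root_.sylvester f g n m i j ^ 2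
      = ∑ j : Fin (m + n), if i - m ≤ (j : ℕ) ∧ (j : ℕ) ≤ m + (i - m) then
          g.coeff (m + (i - m) - j) ^ 2 else 0 :=
        sum_congr rfl fun j _ ↦ by
          simp only [_root_.sylvester, of_apply, if_neg hi.not_gt, ite_pow]; simp
    _ ≤ _ := sum_fin_window_le (fun t ↦ sq_nonneg _) _ _

end Sylvester

theorem sum_range_add_one_sq_le (d : ℕ) :
    ∑ t ∈ range d, ((t : ℝ) + 1) ^ 2 ≤ ((d : ℝ) + 1) ^ 3 / 3 := by
  induction d with
  | zero => norm_num
  | succ d ih =>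
    rw [sum_range_succ]
    push_cast
    have step : ((d : ℝ) + 1) ^ 2 ≤ ((d : ℝ) + 1 + 1) ^ 3 / 3 - ((d : ℝ) + 1) ^ 3 / 3 := by
      nlinarith [(d.cast_nonneg : (0 : ℝ) ≤ d)]
    linarith

theorem sum_sq_coeff_le {P : ℝ[X]} {u : ℝ} (hu : ∀ i, |P.coeff i| ≤ u) (d : ℕ) :
    ∑ t ∈ range (d + 1), P.coeff t ^ 2 ≤ (u * √(d + 1)) ^ 2 :=
  calc ∑ t ∈ range (d + 1), P.coeff t ^ 2
      ≤ ∑ t ∈ range (d + 1), u ^ 2 :=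
        sum_le_sum fun t _ ↦ sq_le_sq' (abs_le.mp (hu t)).1 (abs_le.mp (hu t)).2
    _ = (u * √(d + 1)) ^ 2 := by
      rw [sum_const, card_range, mul_pow, Real.sq_sqrt (by positivity), nsmul_eq_mul]
      push_cast
      ring

theorem sum_sq_coeff_derivative_le {P : ℝ[X]} {u : ℝ} (hu : ∀ i, |P.coeff i| ≤ u) (d : ℕ) :
    ∑ t ∈ range d, (derivative P).coeff t ^ 2 ≤ (u * √((d + 1) ^ 3 / 3)) ^ 2 := by
  have hcoeff (t : ℕ) : (derivative P).coeff t ^ 2 ≤ u ^ 2 * ((t : ℝ) + 1) ^ 2 := by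
    rw [coeff_derivative, mul_pow, ← sq_abs (P.coeff _)]
    gcongr
    exact hu _
  calc ∑ t ∈ range d, (derivative P).coeff t ^ 2
      ≤ ∑ t ∈ range d, u ^ 2 * ((t : ℝ) + 1) ^ 2 := sum_le_sum fun t _ ↦ hcoeff t
    _ = u ^ 2 * ∑ t ∈ range d, ((t : ℝ) + 1) ^ 2 := (mul_sum _ _ _).symm
    _ ≤ u ^ 2 * (((d : ℝ) + 1) ^ 3 / 3) := by gcongr; exact sum_range_add_one_sq_le d
    _ = (u * √((d + 1) ^ 3 / 3)) ^ 2 := by rw [mul_pow, Real.sq_sqrt (by positivity)]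

theorem abs_coeff_det_sylvester_sub_C_X_le (P : ℝ[X]) {d : ℕ} (hd : 1 ≤ d) {u : ℝ}
    (hu : ∀ i, |P.coeff i| ≤ u) (k : ℕ) :
    |(_root_.sylvester (P.map C - C X) ((derivative P).map C) d (d - 1)).det.coeff k| ≤
      (d - 1).choose k * (u * √(d + 1)) ^ (d - 1 - k) * (u * √((d + 1) ^ 3 / 3)) ^ d := by
  have hu0 : 0 ≤ u := (abs_nonneg _).trans (hu 0)
  set α := u * √((d : ℝ) + 1)
  set β := u * √(((d : ℝ) + 1) ^ 3 / 3)
  set a : Fin (d - 1 + d) → ℝ := fun i ↦ if (i : ℕ) < d - 1 then α else β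
  set b : Fin (d - 1 + d) → ℝ := fun i ↦ if (i : ℕ) < d - 1 then 1 else 0
  have ha (i) : √(∑ j, _root_.sylvester P (derivative P) d (d - 1) i j ^ 2) ≤ a i := by
    simp only [a]
    split_ifs with hi <;> refine Real.sqrt_le_iff.mpr ⟨by positivity, ?_⟩
    · exact (sum_sq_sylvester_of_lt _ _ hi).trans (sum_sq_coeff_le hu d)
    · refine (sum_sq_sylvester_of_le _ _ (not_lt.mp hi)).trans ?_
      rw [Nat.sub_add_cancel hd]
      exact sum_sq_coeff_derivative_le hu d
  have hb (i) : √(∑ j, _root_.sylvester (-1) 0 d (d - 1) i j ^ 2) ≤ b i := by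
    simp only [b]
    split_ifs with hi <;> refine Real.sqrt_le_iff.mpr ⟨by positivity, ?_⟩
    · exact (sum_sq_sylvester_of_lt _ _ hi).trans (by simp [coeff_one])
    · exact (sum_sq_sylvester_of_le _ _ (not_lt.mp hi)).trans (by simp)
  have hprod : (∏ i, (C (a i) + X * C (b i))).coeff k =
      (d - 1).choose k * α ^ (d - 1 - k) * β ^ d := by
    simp only [a, b, Fin.prod_univ_add, Fin.val_castAdd, Fin.is_lt, ↓reduceIte, map_one, mul_one,
      prod_const, card_univ, Fintype.card_fin, Fin.val_natAdd, add_lt_iff_neg_left, not_lt_zero,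
      map_zero, mul_zero, add_zero]
    rw [← C_pow, coeff_mul_C, add_comm, coeff_X_add_C_pow]
    ring
  rw [sylvester_map_C_sub_C_X]
  exact (abs_coeff_det_map_C_add_X_smul_le _ _ ha hb k).trans_eq hprod

theorem Real.rpow_neg_div_two_mul_pow {c : ℝ} (hc : 0 ≤ c) (x : ℝ) (d : ℕ) :
    c ^ (-(d : ℝ) / 2) * x ^ d = (x / √c) ^ d := by
  have : c ^ (-(d : ℝ) / 2) = ((√c) ^ d)⁻¹ := by
    rw [Real.sqrt_eq_rpow, ← Real.rpow_natCast, ← Real.rpow_mul hc, ← Real.rpow_neg hc]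
    ring_nf
  rw [this, div_pow, inv_mul_eq_div]

theorem choose_mul_pow_mul_pow_lt {v : ℝ} (hv : 1 ≤ v) {d k : ℕ} (hd : 1 ≤ d) (hk : k ≤ d - 1) :
    (d - 1).choose k * ((v - 1) * √(d + 1)) ^ (d - 1 - k) * ((v - 1) * √((d + 1) ^ 3 / 3)) ^ d <
      (3 : ℝ) ^ (-(d : ℝ) / 2) * (v * √((d + 1) ^ 3)) ^ d * (d - 1).choose k *
        (v * √(d + 1) - 1) ^ (d - 1 - k) := by
  have hsqrt : 1 < √((d : ℝ) + 1) :=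
    Real.lt_sqrt zero_le_one |>.mpr (by norm_num; exact_mod_cast hd)
  have hchoose : (0 : ℝ) < (d - 1).choose k := by exact_mod_cast Nat.choose_pos hk
  rw [Real.rpow_neg_div_two_mul_pow (by norm_num), mul_div_assoc,
    ← Real.sqrt_div' _ (by norm_num : (0 : ℝ) ≤ 3), mul_comm _ ((d - 1).choose k : ℝ), mul_assoc,
    mul_assoc, mul_comm (_ ^ d)]
  refine mul_lt_mul_of_pos_left (mul_lt_mul' ?_ ?_ (by positivity) ?_) hchoose
  · exact pow_le_pow_left₀ (by nlinarith) (by nlinarith) _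
  · exact pow_lt_pow_left₀ (by gcongr; linarith) (by positivity) (by omega)
  · exact pow_pos (by nlinarith) _

theorem resultant_coeff_bound_general (P : Polynomial ℤ) (d τ : ℕ) (hd : 1 ≤ d)
    (hτ : ∀ i, |P.coeff i| ≤ 2 ^ τ - 1) :
    ∀ i ≤ d - 1,
      ((abs ((_root_.sylvester (P.map Polynomial.C - Polynomial.C Polynomial.X)
          ((derivative P).map Polynomial.C) d (d - 1)).det.coeff i) : ℤ) : ℝ) <
        (3:ℝ) ^ (-(d:ℝ)/2) * ((2:ℝ) ^ τ * Real.sqrt (((d:ℝ)+1)^3)) ^ d *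
          ((d - 1).choose i) * ((2:ℝ) ^ τ * Real.sqrt ((d:ℝ)+1) - 1) ^ (d - 1 - i) := by
  intro k hk
  have hu (t : ℕ) : |(P.map (Int.castRingHom ℝ)).coeff t| ≤ (2 : ℝ) ^ τ - 1 := by
    simpa using (by exact_mod_cast hτ t : ((|P.coeff t| : ℤ) : ℝ) ≤ ((2 ^ τ - 1 : ℤ) : ℝ))
  calc ((|(_root_.sylvester (P.map C - C X) ((derivative P).map C) d (d - 1)).det.coeff k| : ℤ) : ℝ)
      = |(_root_.sylvester ((P.map (Int.castRingHom ℝ)).map C - C X)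
          ((derivative (P.map (Int.castRingHom ℝ))).map C) d (d - 1)).det.coeff k| := by
        rw [Int.cast_abs, ← eq_intCast (Int.castRingHom ℝ), coeff_det_sylvester_sub_C_X_map,
          derivative_map]
    _ ≤ _ := abs_coeff_det_sylvester_sub_C_X_le _ hd hu k
    _ < _ := choose_mul_pow_mul_pow_lt (one_le_pow₀ one_le_two) hd hk

theorem resultant_coeff_bound (P : Polynomial ℤ) (d τ : ℕ) (hd : 1 ≤ d)
    (hdeg : P.natDegree = d) (hτ : ∀ i, |P.coeff i| ≤ 2 ^ τ - 1) :
    ∀ i ≤ d - 1,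
      ((abs ((_root_.sylvester (P.map Polynomial.C - Polynomial.C Polynomial.X)
          ((derivative P).map Polynomial.C) d (d - 1)).det.coeff i) : ℤ) : ℝ) <
        (3:ℝ) ^ (-(d:ℝ)/2) * ((2:ℝ) ^ τ * Real.sqrt (((d:ℝ)+1)^3)) ^ d *
          ((d - 1).choose i) * ((2:ℝ) ^ τ * Real.sqrt ((d:ℝ)+1) - 1) ^ (d - 1 - i) :=
  resultant_coeff_bound_general P d τ hd hτ
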